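/- Let p be a prime and let σ ∈ F_p[[t]] with σ ≡ t (mod t²) be a power series of finite compositional order that, viewed as an element of the Laurent series field F_p((t)), is algebraic over the rational function field F_p(t). Let F_p(σ), F_p(t) and F_p(t, σ) denote the subfields of F_p((t)) generated over F_p by σ, by t, and by t and σ, respectively. Then [F_p(t, σ) : F_p(t)] = [F_p(t, σ) : F_p(σ)] (the degree of σ over F_p(t) equals the height, i.e., the degree of t over F_p(σ)). -/

import Mathlib

open PowerSeries

set_option synthInstance.maxHeartbeats 1000000
set_option maxHeartbeats 1000000

/-- Composition of power series `σ ∘ τ` (substitution of `τ` into `σ`), valid when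
`τ` has zero constant coefficient. -/
noncomputable def ngComp {R : Type*} [CommRing R] (σ τ : PowerSeries R) : PowerSeries R :=
  PowerSeries.mk fun k =>
    ∑ n ∈ Finset.range (k + 1), PowerSeries.coeff n σ * PowerSeries.coeff k (τ ^ n)

/-- `ngIter σ n = σ^{∘n}`, the `n`-fold compositional iterate. -/
noncomputable def ngIter {R : Type*} [CommRing R] (σ : PowerSeries R) : ℕ → PowerSeries R
  | 0 => PowerSeries.X
  | n + 1 => ngComp σ (ngIter σ n)

/-- The element `t` of the Laurent series field `F_p((t))`. -/
noncomputable def tL (p : ℕ) [Fact p.Prime] : LaurentSeries (ZMod p) :=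
  ((PowerSeries.X : PowerSeries (ZMod p)) : LaurentSeries (ZMod p))

/-- A power series viewed as an element of the Laurent series field `F_p((t))`. -/
noncomputable def sL (p : ℕ) [Fact p.Prime] (σ : PowerSeries (ZMod p)) :
    LaurentSeries (ZMod p) :=
  (σ : LaurentSeries (ZMod p))

/-!
Substitution `f ↦ f ∘ σ` is a ring automorphism of `F_p[[t]]`: if `σ^{∘n} = t`, its inverse is
substitution of `σ^{∘(n-1)}`. So it extends to an automorphism `Φ` of `F_p((t))` with `Φ t = σ`,
which maps `F_p(t)` onto `F_p(σ)`. The orbit `t, σ, σ^{∘2}, …` of `t` under `Φ` is finite, so the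
field `M` it generates is `Φ`-stable, and it is finite over `F_p(t)` because algebraicity over
`F_p(t)` propagates along the orbit. Hence `[M : F_p(t)] = [Φ M : Φ F_p(t)] = [M : F_p(σ)]`, and
the tower law through `F_p(t, σ) ⊆ M` cancels the common factor `[M : F_p(t, σ)]`.
-/

namespace PowerSeries

variable {R : Type*} [CommRing R]

theorem ngComp_eq_subst {τ : R⟦X⟧} (hτ : constantCoeff τ = 0) (f : R⟦X⟧) :
    ngComp f τ = f.subst τ := by
  ext k
  rw [ngComp, coeff_mk, coeff_subst' (HasSubst.of_constantCoeff_zero' hτ),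
    finsum_eq_sum_of_support_subset _ (s := Finset.range (k + 1))]
  · rfl
  · intro d hd
    rw [Finset.coe_range, Set.mem_Iio, Nat.lt_succ_iff]
    by_contra! hkd
    apply hd
    have hτd : (k : ℕ∞) < (τ ^ d).order :=
      (Nat.cast_lt.mpr hkd).trans_le (le_order_pow_of_constantCoeff_eq_zero d hτ)
    simp only [coeff_of_lt_order k hτd, smul_zero]

theorem constantCoeff_ngIter {σ : R⟦X⟧} (hσ : constantCoeff σ = 0) (k : ℕ) :
    constantCoeff (ngIter σ k) = 0 := by
  induction k with
  | zero => exact constantCoeff_X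
  | succ k ih =>
    rw [ngIter, ngComp_eq_subst ih]
    exact constantCoeff_subst_eq_zero ih σ hσ

theorem ngIter_succ {σ : R⟦X⟧} (hσ : constantCoeff σ = 0) (k : ℕ) :
    ngIter σ (k + 1) = σ.subst (ngIter σ k) :=
  ngComp_eq_subst (constantCoeff_ngIter hσ k) σ

theorem subst_ngIter {σ : R⟦X⟧} (hσ : constantCoeff σ = 0) (k : ℕ) :
    (ngIter σ k).subst σ = ngIter σ (k + 1) := by
  induction k with
  | zero => rw [ngIter_succ hσ, ngIter, subst_X (HasSubst.of_constantCoeff_zero' hσ), X_subst]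
  | succ k ih =>
    rw [ngIter_succ hσ, ngIter_succ hσ (k + 1), ← ih,
      subst_comp_subst_apply (HasSubst.of_constantCoeff_zero' (constantCoeff_ngIter hσ k))
        (HasSubst.of_constantCoeff_zero' hσ)]

noncomputable def substRingEquiv {a b : R⟦X⟧} (ha : HasSubst a) (hb : HasSubst b)
    (hab : a.subst b = X) (hba : b.subst a = X) : R⟦X⟧ ≃+* R⟦X⟧ :=
  RingEquiv.ofRingHom (substAlgHom ha : R⟦X⟧ →ₐ[R] R⟦X⟧).toRingHom
    (substAlgHom hb : R⟦X⟧ →ₐ[R] R⟦X⟧).toRingHom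
    (by ext1 f; simp [coe_substAlgHom, subst_comp_subst_apply hb ha, hba, X_subst])
    (by ext1 f; simp [coe_substAlgHom, subst_comp_subst_apply ha hb, hab, X_subst])

@[simp]
theorem substRingEquiv_apply {a b : R⟦X⟧} (ha : HasSubst a) (hb : HasSubst b)
    (hab : a.subst b = X) (hba : b.subst a = X) (f : R⟦X⟧) :
    substRingEquiv ha hb hab hba f = f.subst a := by
  simp [substRingEquiv, coe_substAlgHom]

section LaurentSeries

variable {K : Type*} [Field K]

theorem exists_laurentSeries_ringHom_subst {σ : K⟦X⟧} (hσ : constantCoeff σ = 0) {n : ℕ}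
    (hn : 0 < n) (hσn : ngIter σ n = X) :
    ∃ Φ : LaurentSeries K →+* LaurentSeries K, ∀ f : K⟦X⟧, Φ f = (f.subst σ : K⟦X⟧) := by
  set τ := ngIter σ (n - 1)
  have hτ : constantCoeff τ = 0 := constantCoeff_ngIter hσ (n - 1)
  have hστ : σ.subst τ = X := by rw [← ngIter_succ hσ, Nat.sub_add_cancel hn, hσn]
  have hτσ : τ.subst σ = X := by rw [subst_ngIter hσ, Nat.sub_add_cancel hn, hσn]
  let e := substRingEquiv (HasSubst.of_constantCoeff_zero' hσ)
    (HasSubst.of_constantCoeff_zero' hτ) hστ hτσ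
  refine ⟨IsFractionRing.ringEquivOfRingEquiv (K := LaurentSeries K) (L := LaurentSeries K) e,
    fun f => ?_⟩
  simpa [LaurentSeries.coe_algebraMap, e] using
    IsFractionRing.ringEquivOfRingEquiv_algebraMap (K := LaurentSeries K) (L := LaurentSeries K) e f

theorem iterate_coe_X_eq_ngIter {σ : K⟦X⟧} (hσ : constantCoeff σ = 0)
    {Φ : LaurentSeries K →+* LaurentSeries K} (hΦ : ∀ f : K⟦X⟧, Φ f = (f.subst σ : K⟦X⟧)) (k : ℕ) :
    Φ^[k] ((X : K⟦X⟧) : LaurentSeries K) = ngIter σ k := by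
  induction k with
  | zero => rfl
  | succ k ih => rw [Function.iterate_succ_apply', ih, hΦ, subst_ngIter hσ]

end LaurentSeries

end PowerSeries

namespace Subfield

variable {L : Type*} [Field L]

theorem isAlgebraic_map {L' : Type*} [Field L'] (f : L →+* L') (A : Subfield L) {y : L}
    (hy : IsAlgebraic A y) : IsAlgebraic (A.map f) (f y) :=
  hy.ringHom_of_comp_eq (f.restrict A (A.map f) fun a ha => mem_map.2 ⟨a, ha, rfl⟩) f
    (RingHom.injective _) rfl

theorem isAlgebraic_of_le_algebraicClosure {A B : Subfield L}
    (hB : B ≤ (algebraicClosure A L).toSubfield) {z : L} (hz : IsAlgebraic B z) :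
    IsAlgebraic A z := by
  have hz' : IsAlgebraic (algebraicClosure A L) z :=
    hz.ringHom_of_comp_eq (inclusion hB) (RingHom.id L) (inclusion hB).injective rfl
  exact hz'.restrictScalars A

theorem toSubfield_adjoin (A : Subfield L) (S : Set L) :
    (IntermediateField.adjoin A S).toSubfield = A ⊔ closure S := by
  rw [IntermediateField.adjoin_toSubfield, closure_union, algebraMap_ofSubfield, coe_subtype,
    Subtype.range_coe, closure_eq]

theorem finrank_adjoin (A : Subfield L) (S : Set L) :
    Module.finrank A (IntermediateField.adjoin A S) = A.relfinrank (A ⊔ closure S) := by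
  have h : IntermediateField.adjoin A S = extendScalars (le_sup_left : A ≤ A ⊔ closure S) :=
    IntermediateField.toSubfield_injective (by rw [toSubfield_adjoin, extendScalars_toSubfield])
  rw [relfinrank_eq_finrank_of_le le_sup_left, h]

theorem isAlgebraic_iterate_of_isAlgebraic_apply (Φ : L →+* L) {x : L}
    (hx : IsAlgebraic (closure {x}) (Φ x)) (k : ℕ) : IsAlgebraic (closure {x}) (Φ^[k] x) := by
  have hΦA : (closure {x}).map Φ ≤ (algebraicClosure (closure {x}) L).toSubfield := by
    rw [RingHom.map_field_closure, Set.image_singleton, closure_le, Set.singleton_subset_iff]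
    exact mem_algebraicClosure_iff.2 hx
  induction k with
  | zero => exact isAlgebraic_algebraMap (⟨x, subset_closure rfl⟩ : closure {x})
  | succ k ih =>
    rw [Function.iterate_succ_apply']
    exact isAlgebraic_of_le_algebraicClosure hΦA (isAlgebraic_map Φ _ ih)

theorem relfinrank_eq_relfinrank_map_of_map_eq (Φ : L →+* L) {A C M : Subfield L} (hAC : A ≤ C)
    (hΦAC : A.map Φ ≤ C) (hCM : C ≤ M) (hM : M.map Φ = M) (hAM : A.relfinrank M ≠ 0) :
    A.relfinrank C = (A.map Φ).relfinrank C := by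
  have hΦAM : (A.map Φ).relfinrank M = A.relfinrank M := by
    simpa only [hM] using relfinrank_map_map A M Φ
  have htower := relfinrank_mul_relfinrank hAC hCM
  have htowerΦ := relfinrank_mul_relfinrank hΦAC hCM
  have hCM : C.relfinrank M ≠ 0 := right_ne_zero_of_mul (htower ▸ hAM)
  exact Nat.eq_of_mul_eq_mul_right (Nat.pos_of_ne_zero hCM) (by rw [htower, htowerΦ, hΦAM])

theorem relfinrank_sup_eq_of_mem_periodicPts (Φ : L →+* L) {x : L}
    (hx : x ∈ Function.periodicPts Φ) (halg : IsAlgebraic (closure {x}) (Φ x)) :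
    (closure {x}).relfinrank (closure {x} ⊔ closure {Φ x}) =
      (closure {Φ x}).relfinrank (closure {x} ⊔ closure {Φ x}) := by
  obtain ⟨n, hn, hxn⟩ := hx
  set A := closure {x}
  set S := Set.range fun k => Φ^[k] x
  have hS : Φ '' S = S := by
    refine subset_antisymm ?_ ?_
    · rintro _ ⟨_, ⟨k, rfl⟩, rfl⟩
      exact ⟨k + 1, Function.iterate_succ_apply' Φ k x⟩
    · rintro _ ⟨k, rfl⟩
      refine ⟨Φ^[k + n - 1] x, ⟨_, rfl⟩, ?_⟩
      rw [← Function.iterate_succ_apply' Φ, Nat.succ_eq_add_one, Nat.sub_add_cancel (by omega),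
        Function.iterate_add_apply, hxn.eq]
  have : Finite S := by
    refine ((Set.finite_Iio n).image fun k => Φ^[k] x).subset ?_
    rintro _ ⟨k, rfl⟩
    exact ⟨k % n, Nat.mod_lt k hn, hxn.iterate_mod_apply k⟩
  have hAS : A ≤ closure S := closure_le.2 (Set.singleton_subset_iff.2 (subset_closure ⟨0, rfl⟩))
  have hΦA : A.map Φ = closure {Φ x} := by
    rw [RingHom.map_field_closure, Set.image_singleton]
  have hAM : A.relfinrank (closure S) ≠ 0 := by
    have : FiniteDimensional A (IntermediateField.adjoin A S) :=
      IntermediateField.finiteDimensional_adjoin fun _ ⟨k, hk⟩ =>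
        hk ▸ (isAlgebraic_iterate_of_isAlgebraic_apply Φ halg k).isIntegral
    rw [← sup_of_le_right hAS, ← finrank_adjoin]
    exact Module.finrank_pos.ne'
  have hΦAS : A.map Φ ≤ closure S := by
    rw [hΦA, closure_le, Set.singleton_subset_iff]
    exact subset_closure ⟨1, rfl⟩
  rw [← hΦA]
  exact relfinrank_eq_relfinrank_map_of_map_eq Φ le_sup_left le_sup_right (sup_le hAS hΦAS)
    (by rw [RingHom.map_field_closure, hS]) hAM

end Subfield

theorem statement11_general (p : ℕ) [Fact p.Prime] (σ : PowerSeries (ZMod p))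
    (h0 : PowerSeries.coeff 0 σ = 0)
    (hfin : ∃ n : ℕ, 0 < n ∧ ngIter σ n = PowerSeries.X)
    (halg : IsAlgebraic (Subfield.closure {tL p}) (sL p σ)) :
    Module.finrank (Subfield.closure {tL p})
      (IntermediateField.adjoin (Subfield.closure {tL p})
        ({sL p σ} : Set (LaurentSeries (ZMod p)))) =
    Module.finrank (Subfield.closure {sL p σ})
      (IntermediateField.adjoin (Subfield.closure {sL p σ})
        ({tL p} : Set (LaurentSeries (ZMod p)))) := by
  obtain ⟨n, hn, hσn⟩ := hfin
  have hσ : constantCoeff σ = 0 := by rwa [← coeff_zero_eq_constantCoeff_apply]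
  obtain ⟨Φ, hΦ⟩ := exists_laurentSeries_ringHom_subst hσ hn hσn
  have hΦt : Φ (tL p) = sL p σ := by
    rw [tL, hΦ, subst_X (HasSubst.of_constantCoeff_zero' hσ)]; rfl
  have hper : tL p ∈ Function.periodicPts Φ := by
    refine ⟨n, hn, ?_⟩
    rw [Function.IsPeriodicPt, Function.IsFixedPt, tL, iterate_coe_X_eq_ngIter hσ hΦ, hσn]
  rw [Subfield.finrank_adjoin, Subfield.finrank_adjoin, sup_comm (Subfield.closure {sL p σ}),
    ← hΦt]
  exact Subfield.relfinrank_sup_eq_of_mem_periodicPts Φ hper (hΦt ▸ halg)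

/-- For a power series `σ ≡ t (mod t²)` over `F_p` of finite compositional order that is
algebraic over `F_p(t)`, the degree `[F_p(t,σ) : F_p(t)]` equals the height
`[F_p(t,σ) : F_p(σ)]`.  Here `F_p(t) = Subfield.closure {t}` since `F_p` is the prime field,
`F_p(t,σ) = F_p(t)(σ) = F_p(σ)(t)`, and degrees are taken as `Module.finrank`. -/
theorem statement11 (p : ℕ) [Fact p.Prime] (σ : PowerSeries (ZMod p))
    (h0 : PowerSeries.coeff 0 σ = 0) (h1 : PowerSeries.coeff 1 σ = 1)
    (hfin : ∃ n : ℕ, 0 < n ∧ ngIter σ n = PowerSeries.X)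
    (halg : IsAlgebraic (Subfield.closure {tL p}) (sL p σ)) :
    Module.finrank (Subfield.closure {tL p})
      (IntermediateField.adjoin (Subfield.closure {tL p})
        ({sL p σ} : Set (LaurentSeries (ZMod p)))) =
    Module.finrank (Subfield.closure {sL p σ})
      (IntermediateField.adjoin (Subfield.closure {sL p σ})
        ({tL p} : Set (LaurentSeries (ZMod p)))) :=
  statement11_general p σ h0 hfin halg
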